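/- Let H be a commutative graded connected Hopf algebra with preparation map components R^0 = 1⊗id and R^n = (-1)^n (μ_n ⊗ id) ∘ Δ^(n) for n ≥ 1. Then for all m, n ≥ 0, the composite (μ₃ ⊗ id) ∘ (R^m ⊗ R^n) ∘ Δ' equals -R^{m+n+1}, where μ₃: H^{⊗3} → H is triple multiplication applied to the first three factors of H^{⊗4}. -/

import Mathlib

open TensorProduct

variable (K : Type*) [Field K] [CharZero K]
variable (H : Type*) [CommRing H] [HopfAlgebra K H]

/-- The reduced coproduct `Δ' = Δ - 1⊗id - id⊗1`. -/
noncomputable def redComul : H →ₗ[K] H ⊗[K] H :=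
  Coalgebra.comul - TensorProduct.mk K H H 1 - (TensorProduct.mk K H H).flip 1

/-- `H ⊗ (⨂ⁿ H) ≃ ⨂ⁿ⁺¹ H`. -/
noncomputable def tpowSuccEquiv (n : ℕ) :
    (H ⊗[K] (⨂[K]^n H)) ≃ₗ[K] ⨂[K]^(n+1) H :=
  (TensorProduct.congr
      ((PiTensorProduct.subsingletonEquiv (0 : Fin 1)).symm) (LinearEquiv.refl K _)).trans
  ((PiTensorProduct.tmulEquiv K H).trans
    (PiTensorProduct.reindex K (fun _ => H) ((finSumFinEquiv).trans (finCongr (by omega)))))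

/-- The iterated reduced coproduct: `DIter 0 = id` (as a map `H → ⨂¹H`) and
`DIter (n+1) = (id ⊗ DIter n) ∘ Δ'`, so that for `n ≥ 1`, `DIter n = Δ^(n)`. -/
noncomputable def DIter : (n : ℕ) → (H →ₗ[K] ⨂[K]^(n+1) H)
  | 0 => ((PiTensorProduct.subsingletonEquiv (R := K) (s := fun _ : Fin 1 => H) (0 : Fin 1)).symm : H ≃ₗ[K] ⨂[K]^1 H).toLinearMap
  | n+1 => (tpowSuccEquiv K H (n+1)).toLinearMap ∘ₗ
      (LinearMap.lTensor H (DIter n)) ∘ₗ redComul K H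

/-- `n`-fold multiplication `μ_n : H^{⊗n} → H`. -/
noncomputable def muN (n : ℕ) : (⨂[K]^n H) →ₗ[K] H :=
  PiTensorProduct.lift (MultilinearMap.mkPiAlgebraFin K n H)

/-- Splitting off the last tensor factor, `⨂ⁿ⁺¹ H ≃ (⨂ⁿ H) ⊗ H`. -/
noncomputable def tpowSplitLast (n : ℕ) :
    (⨂[K]^(n+1) H) ≃ₗ[K] (⨂[K]^n H) ⊗[K] H :=
  ((PiTensorProduct.reindex K (fun _ => H) ((finSumFinEquiv (m := n) (n := 1)).symm)).trans
    (PiTensorProduct.tmulEquiv K H).symm).trans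
  (TensorProduct.congr (LinearEquiv.refl K _)
    (PiTensorProduct.subsingletonEquiv (0 : Fin 1)))

/-- `Sn n = (μ_n ⊗ id) ∘ Δ^(n) : H → H ⊗ H`; in Sweedler notation
`Sn n (x) = x⁽¹⁾⋯x⁽ⁿ⁾ ⊗ x⁽ⁿ⁺¹⁾`.  In particular `Sn 0 = 1 ⊗ id`. -/
noncomputable def Sn (n : ℕ) : H →ₗ[K] H ⊗[K] H :=
  LinearMap.rTensor H (muN K H n) ∘ₗ (tpowSplitLast K H n).toLinearMap ∘ₗ DIter K H n

/-- The components `R^n = (-1)^n (μ_n ⊗ id) ∘ Δ^(n)` of the preparation map. -/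
noncomputable def Rn (n : ℕ) : H →ₗ[K] H ⊗[K] H := ((-1 : K) ^ n) • Sn K H n

/-- `R` is the preparation map `R = 1⊗id + Σ_{n≥1} (-1)ⁿ (μ_n ⊗ id) ∘ Δ^(n)`:
on every element the sum terminates and `R` is given by the (finite) sum. -/
def IsPreparationMap (R : H →ₗ[K] H ⊗[K] H) : Prop :=
  (∀ x : H, ∃ N : ℕ, ∀ n, N ≤ n → Sn K H n x = 0) ∧
  (∀ (x : H) (N : ℕ), (∀ n, N ≤ n → Sn K H n x = 0) →
    R x = ∑ n ∈ Finset.range N, Rn K H n x)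
variable (𝒜 : ℕ → Submodule K H)

/-- The coproduct is compatible with the grading: `Δ(𝒜 n) ⊆ Σ_{p+q=n} 𝒜 p ⊗ 𝒜 q`. -/
def ComulGraded : Prop :=
  ∀ n : ℕ, ∀ x ∈ 𝒜 n,
    Coalgebra.comul (R := K) x ∈
      ⨆ pq : {pq : ℕ × ℕ // pq.1 + pq.2 = n},
        LinearMap.range (TensorProduct.map (𝒜 pq.1.1).subtype (𝒜 pq.1.2).subtype)


/-- `μ₃ ⊗ id : H^{⊗4} → H^{⊗2}` multiplying the first three tensor factors together. -/
noncomputable def mu3TensorId : ((H ⊗[K] H) ⊗[K] (H ⊗[K] H)) →ₗ[K] H ⊗[K] H :=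
  LinearMap.rTensor H
      (LinearMap.mul' K H ∘ₗ LinearMap.rTensor H (LinearMap.mul' K H)) ∘ₗ
    (TensorProduct.assoc K (H ⊗[K] H) H H).symm.toLinearMap

/-!
Write `S_n = (μ_n ⊗ id) ∘ Δ^(n)`, so that `R^n = (-1)ⁿ S_n`; in Sweedler notation
`S_n x = x⁽¹⁾⋯x⁽ⁿ⁾ ⊗ x⁽ⁿ⁺¹⁾`. Unfolding one step of the iterated reduced coproduct gives
`S_0 = 1 ⊗ id` and `S_{n+1} = (μ ⊗ id) ∘ (id ⊗ S_n) ∘ Δ'`. Induction on `m`, trading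
`(Δ' ⊗ id) ∘ Δ'` for `(id ⊗ Δ') ∘ Δ'` by coassociativity of `Δ'`, then shows
`(μ₃ ⊗ id) ∘ (S_m ⊗ S_n) ∘ Δ' = S_{m+n+1}`, and the signs combine as
`(-1)^m (-1)^n = -(-1)^{m+n+1}`.
-/

namespace TensorProduct

variable {R M N P : Type*} [CommSemiring R] [AddCommMonoid M] [AddCommMonoid N]
  [AddCommMonoid P] [Module R M] [Module R N] [Module R P]

theorem assoc_rTensor_mk (m : M) (t : N ⊗[R] P) :
    TensorProduct.assoc R M N P (LinearMap.rTensor P (mk R M N m) t) = m ⊗ₜ t := by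
  induction t using TensorProduct.induction_on with
  | zero => simp
  | tmul => rfl
  | add u v hu hv => simp only [map_add, hu, hv, tmul_add]

theorem assoc_rTensor_mk_flip (n : N) (t : M ⊗[R] P) :
    TensorProduct.assoc R M N P (LinearMap.rTensor P ((mk R M N).flip n) t) =
      LinearMap.lTensor M (mk R N P n) t := by
  induction t using TensorProduct.induction_on with
  | zero => simp
  | tmul => rfl
  | add u v hu hv => simp only [map_add, hu, hv]

theorem assoc_tmul_right (t : M ⊗[R] N) (p : P) :
    TensorProduct.assoc R M N P (t ⊗ₜ p) = LinearMap.lTensor M ((mk R N P).flip p) t := by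
  induction t using TensorProduct.induction_on with
  | zero => simp
  | tmul => rfl
  | add u v hu hv => simp only [add_tmul, map_add, hu, hv]

end TensorProduct

section

variable {F A : Type*} [Field F] [CommRing A] [HopfAlgebra F A]

theorem redComul_coassoc :
    (TensorProduct.assoc F A A A).toLinearMap ∘ₗ
        LinearMap.rTensor A (redComul F A) ∘ₗ redComul F A =
      LinearMap.lTensor A (redComul F A) ∘ₗ redComul F A := by
  ext x
  simp only [redComul, LinearMap.coe_comp, Function.comp_apply, LinearEquiv.coe_coe,
    LinearMap.sub_apply, LinearMap.rTensor_sub, LinearMap.lTensor_sub, map_sub,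
    Coalgebra.coassoc_apply, assoc_rTensor_mk, assoc_rTensor_mk_flip, assoc_tmul_right,
    LinearMap.flip_apply, mk_apply, LinearMap.rTensor_tmul, LinearMap.lTensor_tmul,
    Bialgebra.comul_one, Algebra.TensorProduct.one_def]
  abel

variable (F A)

noncomputable def mu2TensorId : (A ⊗[F] (A ⊗[F] A)) →ₗ[F] A ⊗[F] A :=
  LinearMap.rTensor A (LinearMap.mul' F A) ∘ₗ (TensorProduct.assoc F A A A).symm.toLinearMap

noncomputable def muNTensorId (n : ℕ) : (⨂[F]^(n+1) A) →ₗ[F] A ⊗[F] A :=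
  LinearMap.rTensor A (muN F A n) ∘ₗ (tpowSplitLast F A n).toLinearMap

variable {F A}

theorem tpowSuccEquiv_tmul_tprod (n : ℕ) (x : A) (v : Fin n → A) :
    tpowSuccEquiv F A n (x ⊗ₜ PiTensorProduct.tprod F v) =
      PiTensorProduct.tprod F (Fin.cons x v : Fin (n + 1) → A) := by
  simp only [tpowSuccEquiv, LinearEquiv.trans_apply, TensorProduct.congr_tmul,
    LinearEquiv.refl_apply, PiTensorProduct.subsingletonEquiv_symm_apply,
    PiTensorProduct.tmulEquiv_apply, PiTensorProduct.reindex_tprod, Equiv.symm_trans_apply,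
    finCongr_symm, finCongr_apply]
  congr 1
  ext j
  cases j using Fin.cases with
  | zero => rfl
  | succ i =>
    rw [show Fin.cast _ i.succ = Fin.natAdd 1 i from Fin.ext (by simp [add_comm]),
      finSumFinEquiv_symm_apply_natAdd]
    rfl

theorem tpowSplitLast_tprod (n : ℕ) (w : Fin (n + 1) → A) :
    tpowSplitLast F A n (PiTensorProduct.tprod F w) =
      PiTensorProduct.tprod F (Fin.init w) ⊗ₜ w (Fin.last n) := by
  simp only [tpowSplitLast, LinearEquiv.trans_apply, PiTensorProduct.reindex_tprod,
    Equiv.symm_symm, PiTensorProduct.tmulEquiv_symm_apply, finSumFinEquiv_apply_left,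
    finSumFinEquiv_apply_right, congr_tmul, LinearEquiv.refl_apply,
    PiTensorProduct.subsingletonEquiv_apply_tprod]
  rfl

theorem muN_tprod (n : ℕ) (v : Fin n → A) :
    muN F A n (PiTensorProduct.tprod F v) = (List.ofFn v).prod := by
  simp [muN]

theorem muNTensorId_succ_comp_tpowSuccEquiv (n : ℕ) :
    muNTensorId F A (n + 1) ∘ₗ (tpowSuccEquiv F A (n + 1)).toLinearMap =
      mu2TensorId F A ∘ₗ LinearMap.lTensor A (muNTensorId F A n) := by
  ext x v
  simp only [muNTensorId, mu2TensorId, AlgebraTensorModule.curry_apply, curry_apply,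
    LinearMap.restrictScalars_self, LinearMap.compMultilinearMap_apply, LinearMap.coe_comp,
    LinearEquiv.coe_coe, Function.comp_apply, tpowSuccEquiv_tmul_tprod, tpowSplitLast_tprod,
    Fin.cons_last, LinearMap.rTensor_tmul, LinearMap.lTensor_tmul, muN_tprod, List.ofFn_succ,
    List.prod_cons, assoc_symm_tmul, LinearMap.mul'_apply, Fin.init, Fin.castSucc_zero,
    Fin.cons_zero, Fin.castSucc_succ, Fin.cons_succ]
  rfl

theorem Sn_eq_muNTensorId_comp_DIter (n : ℕ) : Sn F A n = muNTensorId F A n ∘ₗ DIter F A n :=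
  rfl

theorem Sn_zero : Sn F A 0 = mk F A A 1 := by
  ext x
  simp [Sn, DIter, muN, tpowSplitLast]

theorem Sn_succ (n : ℕ) :
    Sn F A (n + 1) = mu2TensorId F A ∘ₗ LinearMap.lTensor A (Sn F A n) ∘ₗ redComul F A := by
  rw [Sn_eq_muNTensorId_comp_DIter, Sn_eq_muNTensorId_comp_DIter, DIter, LinearMap.lTensor_comp,
    ← LinearMap.comp_assoc, muNTensorId_succ_comp_tpowSuccEquiv]
  rfl

theorem mu3TensorId_comp_rTensor_mk_one :
    mu3TensorId F A ∘ₗ LinearMap.rTensor (A ⊗[F] A) (mk F A A 1) = mu2TensorId F A := by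
  ext
  simp [mu3TensorId, mu2TensorId]

theorem mu3TensorId_comp_rTensor_mu2TensorId :
    mu3TensorId F A ∘ₗ LinearMap.rTensor (A ⊗[F] A) (mu2TensorId F A) =
      mu2TensorId F A ∘ₗ LinearMap.lTensor A (mu3TensorId F A) ∘ₗ
        (TensorProduct.assoc F A (A ⊗[F] A) (A ⊗[F] A)).toLinearMap := by
  ext
  simp [mu3TensorId, mu2TensorId, mul_assoc]

theorem mu3TensorId_comp_map_Sn_comp_redComul (m n : ℕ) :
    mu3TensorId F A ∘ₗ map (Sn F A m) (Sn F A n) ∘ₗ redComul F A = Sn F A (m + n + 1) := by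
  induction m with
  | zero =>
    rw [Sn_zero, ← LinearMap.rTensor_comp_lTensor, LinearMap.comp_assoc, ← LinearMap.comp_assoc,
      mu3TensorId_comp_rTensor_mk_one, zero_add, Sn_succ]
  | succ m ih =>
    have hassoc : (TensorProduct.assoc F A (A ⊗[F] A) (A ⊗[F] A)).toLinearMap ∘ₗ
        map (LinearMap.lTensor A (Sn F A m)) (Sn F A n) =
          LinearMap.lTensor A (map (Sn F A m) (Sn F A n)) ∘ₗ
            (TensorProduct.assoc F A A A).toLinearMap :=
      (map_map_comp_assoc_eq _ _ _).symm
    calc mu3TensorId F A ∘ₗ map (Sn F A (m + 1)) (Sn F A n) ∘ₗ redComul F A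
        = mu3TensorId F A ∘ₗ LinearMap.rTensor _ (mu2TensorId F A) ∘ₗ
            map (LinearMap.lTensor A (Sn F A m)) (Sn F A n) ∘ₗ
            LinearMap.rTensor A (redComul F A) ∘ₗ redComul F A := by
          rw [Sn_succ, ← LinearMap.rTensor_comp_map, ← LinearMap.map_comp_rTensor]
          simp only [LinearMap.comp_assoc]
      _ = mu2TensorId F A ∘ₗ LinearMap.lTensor A (mu3TensorId F A) ∘ₗ
            ((TensorProduct.assoc F A (A ⊗[F] A) (A ⊗[F] A)).toLinearMap ∘ₗ
              map (LinearMap.lTensor A (Sn F A m)) (Sn F A n)) ∘ₗ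
            LinearMap.rTensor A (redComul F A) ∘ₗ redComul F A := by
          rw [← LinearMap.comp_assoc, mu3TensorId_comp_rTensor_mu2TensorId]
          simp only [LinearMap.comp_assoc]
      _ = mu2TensorId F A ∘ₗ
            LinearMap.lTensor A (mu3TensorId F A ∘ₗ map (Sn F A m) (Sn F A n) ∘ₗ redComul F A) ∘ₗ
            redComul F A := by
          rw [hassoc]
          simp only [LinearMap.comp_assoc, redComul_coassoc, LinearMap.lTensor_comp]
      _ = Sn F A (m + 1 + n + 1) := by
          rw [ih, ← Sn_succ, add_right_comm m 1 n]

end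

theorem preparation_components_recursion
    (m n : ℕ) :
    mu3TensorId K H ∘ₗ (TensorProduct.map (Rn K H m) (Rn K H n)) ∘ₗ redComul K H =
      -(Rn K H (m + n + 1)) := by
  simp only [Rn, TensorProduct.map_smul_left, TensorProduct.map_smul_right, smul_smul,
    LinearMap.smul_comp, LinearMap.comp_smul, mu3TensorId_comp_map_Sn_comp_redComul]
  module
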